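/- arXiv:2511.06473 — 4 statements merged into one kernel-verified Lean document; each statement's English description precedes it below -/
import Mathlib

section
/- Let G = G₁ ⊗ G₂ be the join of two finite simple graphs, let k be a positive integer, and let f_s, f_t be extended k-colorings of G with |f_s⁻¹(c)| = |f_t⁻¹(c)| for every c ∈ {1,…,k} ∪ {∗} (a valid instance). Suppose that the sets of swappable colors of both restrictions f_s¹ (to V(G₁)) and f_s² (to V(G₂)) are non-empty. For j ∈ {1,2}, define extended k-colorings f^j_{s∗} and f^j_{t∗} of G_j by f^j_{s∗}(v) = ∗ if f_s(v) ∈ S_{f_s} and f^j_{s∗}(v) = f_s(v) otherwise, and f^j_{t∗}(v) = ∗ if f_t(v) ∈ S_{f_t} and f^j_{t∗}(v) = f_t(v) otherwise, for v ∈ V(G_j). Then f_s and f_t are reconfigurable under color swapping in G if and only if f¹_{s∗} and f¹_{t∗} are reconfigurable in G₁ and f²_{s∗} and f²_{t∗} are reconfigurable in G₂. -/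
/-- An extended `k`-coloring of `G`: a map `V → {1,…,k} ∪ {∗}` (with `∗ = none`)
such that adjacent vertices get different colors unless both get `∗`. -/
def IsExtColoring {V : Type*} (G : SimpleGraph V) (k : ℕ) (f : V → Option ℕ) : Prop :=
  (∀ v i, f v = some i → i ∈ Finset.Icc 1 k) ∧
    ∀ ⦃u w : V⦄, G.Adj u w → f u = f w → f u = none

/-- Two extended colorings are adjacent under color swapping: there is an edge
`uw` whose endpoint colors are exchanged, all other vertices keep their color,
and the two colorings are distinct. -/
def ExtCSAdj {V : Type*} (G : SimpleGraph V) (f f' : V → Option ℕ) : Prop :=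
  f ≠ f' ∧ ∃ u w : V, G.Adj u w ∧ f u = f' w ∧ f w = f' u ∧
    ∀ x : V, x ≠ u → x ≠ w → f x = f' x

/-- One step of color-swapping reconfiguration between extended `k`-colorings. -/
def ExtCSStep {V : Type*} (G : SimpleGraph V) (k : ℕ) (f f' : V → Option ℕ) : Prop :=
  IsExtColoring G k f ∧ IsExtColoring G k f' ∧ ExtCSAdj G f f'

/-- Two extended `k`-colorings are reconfigurable under color swapping. -/
def ExtReconf {V : Type*} (G : SimpleGraph V) (k : ℕ) :
    (V → Option ℕ) → (V → Option ℕ) → Prop :=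
  Relation.ReflTransGen (ExtCSStep G k)

/-- The set of swappable colors of an extended coloring `f`: the colors used by
exactly one vertex, together with `∗` whenever some vertex is colored `∗`. -/
def swappableSet {V : Type*} (f : V → Option ℕ) : Set (Option ℕ) :=
  {c | (∃! v, f v = c) ∨ (c = none ∧ ∃ v, f v = none)}

/-- The disjoint union `G₁ ⊕ G₂`. -/
def graphSum {V₁ V₂ : Type*} (G₁ : SimpleGraph V₁) (G₂ : SimpleGraph V₂) :
    SimpleGraph (V₁ ⊕ V₂) :=
  SimpleGraph.fromRel (fun x y =>
    match x, y with
    | Sum.inl u, Sum.inl v => G₁.Adj u v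
    | Sum.inr u, Sum.inr v => G₂.Adj u v
    | _, _ => False)

/-- The join `G₁ ⊗ G₂`: the disjoint union together with all edges between the
two sides. -/
def graphJoin {V₁ V₂ : Type*} (G₁ : SimpleGraph V₁) (G₂ : SimpleGraph V₂) :
    SimpleGraph (V₁ ⊕ V₂) :=
  SimpleGraph.fromRel (fun x y =>
    match x, y with
    | Sum.inl u, Sum.inl v => G₁.Adj u v
    | Sum.inr u, Sum.inr v => G₂.Adj u v
    | Sum.inl _, Sum.inr _ => True
    | Sum.inr _, Sum.inl _ => False)

open scoped Classical in
/-- Replace every color lying in the set `C` of swappable colors by `∗`. -/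
noncomputable def starMask {W : Type*} (C : Set (Option ℕ)) (f : W → Option ℕ) :
    W → Option ℕ :=
  fun v => if f v ∈ C then none else f v

/-!
Colors in the swappable set `S` (used by a single vertex, or `∗`) move freely: exchanging two
of them along an edge never creates a conflict, and every swap preserves the color classes,
hence `S`. Masking the colors of `S` by `∗` turns a swap of the join into at most one swap on
`G₁` or on `G₂`, because a swap across the join necessarily exchanges two colors of `S`.
Conversely a swap of the masked coloring of one side is the same swap of the join. Lifting the
two side sequences therefore takes `f_s` to a coloring with the color classes of `f_t` that
agrees with `f_t` off the positions of `S`. The colors of `S` are then permuted into place one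
transposition at a time; two vertices on the same side are exchanged through a vertex of the
other side carrying a color of `S`, which exists because `S` meets both sides.
-/

open Function Sum Finset

section SwappableSet

variable {V W : Type*}

lemma swappableSet_comp_equiv (f : V → Option ℕ) (e : W ≃ V) :
    swappableSet (f ∘ e) = swappableSet f :=
  Set.ext fun c => or_congr (e.existsUnique_congr_right (q := (f · = c)))
    (and_congr_right fun _ => (e.surjective.exists (p := (f · = none))).symm)

lemma comp_perm_mem_swappableSet {f : V → Option ℕ} (σ : Equiv.Perm V) {v : V}
    (h : f (σ v) ∈ swappableSet f) : (f ∘ σ) v ∈ swappableSet (f ∘ σ) := by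
  rwa [swappableSet_comp_equiv]

lemma none_mem_swappableSet {f : V → Option ℕ} {v : V} (h : f v = none) :
    none ∈ swappableSet f :=
  Or.inr ⟨rfl, v, h⟩

lemma eq_of_mem_swappableSet {f : V → Option ℕ} {c : Option ℕ} (hc : c ∈ swappableSet f)
    (hnone : c ≠ none) {x y : V} (hx : f x = c) (hy : f y = c) : x = y := by
  rcases hc with ⟨v, -, hv⟩ | ⟨rfl, -⟩
  · exact (hv x hx).trans (hv y hy).symm
  · exact absurd rfl hnone

lemma exists_eq_iff_card_filter_ne_zero [Fintype V] (f : V → Option ℕ) (c : Option ℕ) :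
    (∃ v, f v = c) ↔ #{v | f v = c} ≠ 0 := by
  simp

lemma swappableSet_eq_of_card_filter_eq [Fintype V] [Fintype W] {f : V → Option ℕ}
    {g : W → Option ℕ} (h : ∀ c, #{v | f v = c} = #{w | g w = c}) :
    swappableSet f = swappableSet g :=
  Set.ext fun c => by
    simp only [swappableSet, Set.mem_ofPred_eq, Fintype.existsUnique_iff_card_one,
      exists_eq_iff_card_filter_ne_zero, h]

lemma card_filter_comp_equiv [Fintype V] (f : V → Option ℕ) (σ : Equiv.Perm V) (c : Option ℕ) :
    #{v | (f ∘ σ) v = c} = #{v | f v = c} :=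
  Finset.card_equiv σ (by simp)

lemma exists_eq_ne_of_card_filter_eq [Fintype V] {g h : V → Option ℕ} {c : Option ℕ}
    (hcard : #{v | g v = c} = #{v | h v = c}) {p : V} (hgp : g p ≠ c) (hhp : h p = c) :
    ∃ q, g q = c ∧ h q ≠ c := by
  by_contra! hsub
  have heq : univ.filter (g · = c) = univ.filter (h · = c) :=
    Finset.eq_of_subset_of_card_le (fun v hv => by simpa using hsub v (by simpa using hv))
      hcard.ge
  exact hgp (by simpa [hhp] using heq.ge (by simpa using hhp))

lemma card_filter_comp_swap_ne_lt [Fintype V] [DecidableEq V] {g h : V → Option ℕ} {p q : V}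
    (hp : g p ≠ h p) (hgq : g q = h p) (hhq : h q ≠ h p) :
    #{v | (g ∘ Equiv.swap p q) v ≠ h v} < #{v | g v ≠ h v} := by
  refine Finset.card_lt_card (Finset.ssubset_iff_of_subset ?_ |>.mpr ⟨p, by simpa using hp, ?_⟩)
  · intro v hv
    simp only [Finset.mem_filter, Finset.mem_univ, true_and, comp_apply] at hv ⊢
    rcases eq_or_ne v p with rfl | hvp
    · simp [hgq] at hv
    rcases eq_or_ne v q with rfl | hvq
    · rwa [hgq, ne_comm]
    · rwa [Equiv.swap_apply_of_ne_of_ne hvp hvq] at hv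
  · simp [hgq]

end SwappableSet

section StarMask

variable {V W : Type*} {G : SimpleGraph V} {k : ℕ}

lemma starMask_comp (S : Set (Option ℕ)) (f : V → Option ℕ) (e : W → V) :
    starMask S (f ∘ e) = starMask S f ∘ e := rfl

lemma starMask_swappableSet_eq_none_iff (f : V → Option ℕ) (v : V) :
    starMask (swappableSet f) f v = none ↔ f v ∈ swappableSet f := by
  unfold starMask
  split_ifs with h
  · exact iff_of_true rfl h
  · exact iff_of_false (fun h' => h (h' ▸ none_mem_swappableSet h')) h

lemma comp_swap_eq_self [DecidableEq V] {f : V → Option ℕ} {u w : V} (h : f u = f w) :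
    f ∘ Equiv.swap u w = f := by
  funext x
  rcases eq_or_ne x u with rfl | hxu
  · simp [h]
  rcases eq_or_ne x w with rfl | hxw
  · simp [h]
  · simp [Equiv.swap_apply_of_ne_of_ne hxu hxw]

lemma starMask_comp_swap_of_mem [DecidableEq V] {S : Set (Option ℕ)} {f : V → Option ℕ}
    {u w : V} (hu : f u ∈ S) (hw : f w ∈ S) :
    starMask S (f ∘ Equiv.swap u w) = starMask S f := by
  rw [starMask_comp]
  exact comp_swap_eq_self (by simp [starMask, hu, hw])

lemma isExtColoring_starMask {f : V → Option ℕ} (hf : IsExtColoring G k f)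
    (S : Set (Option ℕ)) : IsExtColoring G k (starMask S f) := by
  refine ⟨fun v i hv => ?_, fun u w hadj huw => ?_⟩
  · unfold starMask at hv
    split_ifs at hv
    exact hf.1 v i hv
  · unfold starMask at huw ⊢
    split_ifs at huw ⊢ with hu hw <;> first | rfl | exact huw | exact hf.2 hadj huw

-- Colors in the swappable set other than `∗` occur only once, so they cannot clash.
lemma isExtColoring_of_starMask {f : V → Option ℕ} (hb : ∀ v i, f v = some i → i ∈ Icc 1 k)
    (h : IsExtColoring G k (starMask (swappableSet f) f)) : IsExtColoring G k f := by
  refine ⟨hb, fun u w hadj huw => ?_⟩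
  by_contra hnone
  by_cases hS : f u ∈ swappableSet f
  · exact hadj.ne (eq_of_mem_swappableSet hS hnone rfl huw.symm)
  · have hw : f w ∉ swappableSet f := huw ▸ hS
    have := h.2 hadj
    simp only [starMask, if_neg hS, if_neg hw] at this
    exact hnone (this huw)

end StarMask

section Reconfiguration

variable {V W : Type*} {G : SimpleGraph V} {H : SimpleGraph W} {k : ℕ}

lemma extCSAdj_iff_exists_swap [DecidableEq V] {f f' : V → Option ℕ} :
    ExtCSAdj G f f' ↔ ∃ u w, G.Adj u w ∧ f u ≠ f w ∧ f' = f ∘ Equiv.swap u w := by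
  constructor
  · rintro ⟨hne, u, w, hadj, hu, hw, hrest⟩
    have hf' : f' = f ∘ Equiv.swap u w := by
      funext x
      rcases eq_or_ne x u with rfl | hxu
      · simp [hw]
      rcases eq_or_ne x w with rfl | hxw
      · simp [hu]
      · simp [Equiv.swap_apply_of_ne_of_ne hxu hxw, hrest x hxu hxw]
    refine ⟨u, w, hadj, fun huw => hne ?_, hf'⟩
    rw [hf', comp_swap_eq_self huw]
  · rintro ⟨u, w, hadj, hne, rfl⟩
    refine ⟨fun h => hne ?_, u, w, hadj, by simp, by simp, fun x hxu hxw => ?_⟩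
    · simpa using congrFun h u
    · simp [Equiv.swap_apply_of_ne_of_ne hxu hxw]

lemma ExtReconf.isExtColoring {f f' : V → Option ℕ} (h : ExtReconf G k f f')
    (hf : IsExtColoring G k f) : IsExtColoring G k f' := by
  induction h with
  | refl => exact hf
  | tail _ hstep _ => exact hstep.2.1

lemma ExtReconf.exists_perm {f f' : V → Option ℕ} (h : ExtReconf G k f f') :
    ∃ σ : Equiv.Perm V, f' = f ∘ σ := by
  classical
  induction h with
  | refl => exact ⟨1, rfl⟩
  | tail _ hstep ih =>
    obtain ⟨σ, rfl⟩ := ih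
    obtain ⟨u, w, -, -, rfl⟩ := extCSAdj_iff_exists_swap.mp hstep.2.2
    exact ⟨σ * Equiv.swap u w, rfl⟩

lemma ExtReconf.swappableSet_eq {f f' : V → Option ℕ} (h : ExtReconf G k f f') :
    swappableSet f' = swappableSet f := by
  obtain ⟨σ, rfl⟩ := h.exists_perm
  exact swappableSet_comp_equiv f σ

lemma ExtReconf.exists_eq_of_exists_eq {f f' : V → Option ℕ} (h : ExtReconf G k f f')
    {c : Option ℕ} (hc : ∃ v, f v = c) : ∃ v, f' v = c := by
  obtain ⟨σ, rfl⟩ := h.exists_perm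
  obtain ⟨v, hv⟩ := hc
  exact ⟨σ.symm v, by simpa using hv⟩

lemma ExtReconf.exists_mem_swappableSet {f f' : W → Option ℕ} {e : V → W}
    (h : ExtReconf G k (starMask (swappableSet f) (f ∘ e)) (starMask (swappableSet f') (f' ∘ e)))
    (hf : ∃ v, f (e v) ∈ swappableSet f) : ∃ v, f' (e v) ∈ swappableSet f' := by
  simp only [← starMask_swappableSet_eq_none_iff] at hf ⊢
  exact h.exists_eq_of_exists_eq hf

lemma IsExtColoring.comp_hom {f : W → Option ℕ} (hf : IsExtColoring H k f) (φ : G →g H) :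
    IsExtColoring G k (f ∘ φ) :=
  ⟨fun v => hf.1 (φ v), fun _ _ hadj => hf.2 (φ.map_adj hadj)⟩

lemma ExtCSStep.comp_iso {f f' : W → Option ℕ} (h : ExtCSStep H k f f') (e : G ≃g H) :
    ExtCSStep G k (f ∘ e) (f' ∘ e) := by
  classical
  obtain ⟨hf, hf', hadj⟩ := h
  obtain ⟨u, w, huw, hne, rfl⟩ := extCSAdj_iff_exists_swap.mp hadj
  refine ⟨hf.comp_hom e.toHom, hf'.comp_hom e.toHom, extCSAdj_iff_exists_swap.mpr
    ⟨e.symm u, e.symm w, e.map_adj_iff.mp (by simpa using huw), by simpa using hne, ?_⟩⟩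
  have := e.injective.swap_comp (e.symm u) (e.symm w)
  simp only [RelIso.apply_symm_apply] at this
  rw [comp_assoc, this, ← comp_assoc]

lemma ExtReconf.comp_iso {f f' : W → Option ℕ} (h : ExtReconf H k f f') (e : G ≃g H) :
    ExtReconf G k (f ∘ e) (f' ∘ e) :=
  Relation.ReflTransGen.lift (p := ExtCSStep G k) (· ∘ e) (fun _ _ hstep => hstep.comp_iso e) _ _ h

lemma extReconf_comp_swap [DecidableEq V] {f : V → Option ℕ} {u w : V} (hadj : G.Adj u w)
    (hf : IsExtColoring G k f) (hf' : IsExtColoring G k (f ∘ Equiv.swap u w)) :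
    ExtReconf G k f (f ∘ Equiv.swap u w) := by
  by_cases huw : f u = f w
  · rw [comp_swap_eq_self huw]
    exact .refl
  · exact .single ⟨hf, hf', extCSAdj_iff_exists_swap.mpr ⟨u, w, hadj, huw, rfl⟩⟩

-- The moved vertices carry swappable colors. A clash in a swappable color other than `∗` is
-- impossible, and a clash in any other color involves two unmoved vertices.
lemma IsExtColoring.comp_swap_of_mem [DecidableEq V] {f : V → Option ℕ}
    (hf : IsExtColoring G k f) {u w : V} (hu : f u ∈ swappableSet f)
    (hw : f w ∈ swappableSet f) : IsExtColoring G k (f ∘ Equiv.swap u w) := by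
  refine ⟨fun v => hf.1 _, fun x y hxy hfxy => ?_⟩
  by_contra hnone
  by_cases hS : (f ∘ Equiv.swap u w) x ∈ swappableSet f
  · exact hxy.ne ((Equiv.swap u w).injective (eq_of_mem_swappableSet hS hnone rfl hfxy.symm))
  have fixed : ∀ z, (f ∘ Equiv.swap u w) z ∉ swappableSet f → Equiv.swap u w z = z := by
    intro z hz
    refine Equiv.swap_apply_of_ne_of_ne ?_ ?_ <;> rintro rfl <;> simp_all
  have hx := fixed x hS
  have hy := fixed y (hfxy ▸ hS)
  simp only [comp_apply, hx, hy] at hfxy hnone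
  exact hnone (hf.2 hxy hfxy)

lemma extReconf_comp_swap_of_mem [DecidableEq V] {f : V → Option ℕ} (hf : IsExtColoring G k f)
    {u w : V} (hadj : G.Adj u w) (hu : f u ∈ swappableSet f) (hw : f w ∈ swappableSet f) :
    ExtReconf G k f (f ∘ Equiv.swap u w) :=
  extReconf_comp_swap hadj hf (hf.comp_swap_of_mem hu hw)

-- The transposition `(p q)` is the conjugate `(r p)(q r)(r p)`, and every intermediate
-- swap exchanges two swappable colors along an edge at `r`.
lemma extReconf_comp_swap_of_common_neighbor [DecidableEq V] {f : V → Option ℕ}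
    (hf : IsExtColoring G k f) {p q r : V} (hpr : G.Adj p r) (hqr : G.Adj q r)
    (hp : f p ∈ swappableSet f) (hq : f q ∈ swappableSet f) (hr : f r ∈ swappableSet f) :
    ExtReconf G k f (f ∘ Equiv.swap p q) := by
  rcases eq_or_ne q p with rfl | hqp
  · rw [Equiv.swap_self, Equiv.coe_refl, comp_id]
    exact .refl
  have hqr' : q ≠ r := hqr.ne
  have hrp : r ≠ p := hpr.ne.symm
  have h₁ : ExtReconf G k f (f ∘ Equiv.swap r p) :=
    extReconf_comp_swap_of_mem hf hpr.symm hr hp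
  have h₂ : ExtReconf G k (f ∘ Equiv.swap r p) (f ∘ Equiv.swap r p ∘ Equiv.swap q r) :=
    extReconf_comp_swap_of_mem (h₁.isExtColoring hf) hqr
      (comp_perm_mem_swappableSet _ (by rwa [Equiv.swap_apply_of_ne_of_ne hqr' hqp]))
      (comp_perm_mem_swappableSet _ (by rwa [Equiv.swap_apply_left]))
  have h₃ : ExtReconf G k (f ∘ Equiv.swap r p ∘ Equiv.swap q r)
      (f ∘ Equiv.swap r p ∘ Equiv.swap q r ∘ Equiv.swap r p) :=
    extReconf_comp_swap_of_mem (h₂.isExtColoring (h₁.isExtColoring hf)) hpr.symm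
      (comp_perm_mem_swappableSet (f := f ∘ Equiv.swap r p) _
        (comp_perm_mem_swappableSet _ (by simpa [Equiv.swap_apply_of_ne_of_ne hqr' hqp])))
      (comp_perm_mem_swappableSet (f := f ∘ Equiv.swap r p) _
        (comp_perm_mem_swappableSet _ (by simpa [Equiv.swap_apply_of_ne_of_ne hqp.symm hrp.symm])))
  have hconj : Equiv.swap r p * Equiv.swap q r * Equiv.swap r p = Equiv.swap p q :=
    Equiv.swap_mul_swap_mul_swap hqr' hqp
  rw [← hconj]
  exact h₁.trans (h₂.trans h₃)

end Reconfiguration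

section Join

variable {V₁ V₂ : Type*} {G₁ : SimpleGraph V₁} {G₂ : SimpleGraph V₂} {k : ℕ}

@[simp]
lemma graphJoin_adj_inl_inl {u v : V₁} : (graphJoin G₁ G₂).Adj (inl u) (inl v) ↔ G₁.Adj u v := by
  simpa [graphJoin, G₁.adj_comm v u] using SimpleGraph.Adj.ne

@[simp]
lemma graphJoin_adj_inr_inr {u v : V₂} : (graphJoin G₁ G₂).Adj (inr u) (inr v) ↔ G₂.Adj u v := by
  simpa [graphJoin, G₂.adj_comm v u] using SimpleGraph.Adj.ne

@[simp]
lemma graphJoin_adj_inl_inr (u : V₁) (v : V₂) : (graphJoin G₁ G₂).Adj (inl u) (inr v) := by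
  simp [graphJoin]

@[simp]
lemma graphJoin_adj_inr_inl (u : V₂) (v : V₁) : (graphJoin G₁ G₂).Adj (inr u) (inl v) := by
  simp [graphJoin]

def graphJoinComm : graphJoin G₂ G₁ ≃g graphJoin G₁ G₂ :=
  ⟨Equiv.sumComm V₂ V₁, by rintro (u | u) (v | v) <;> simp⟩

@[simp]
lemma coe_graphJoinComm : ⇑(graphJoinComm : graphJoin G₂ G₁ ≃g graphJoin G₁ G₂) = Sum.swap :=
  rfl

lemma swappableSet_comp_graphJoinComm (f : V₁ ⊕ V₂ → Option ℕ) :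
    swappableSet (f ∘ graphJoinComm (G₁ := G₁) (G₂ := G₂)) = swappableSet f :=
  swappableSet_comp_equiv f (Equiv.sumComm V₂ V₁)

lemma isExtColoring_graphJoin_iff {f : V₁ ⊕ V₂ → Option ℕ} :
    IsExtColoring (graphJoin G₁ G₂) k f ↔
      IsExtColoring G₁ k (f ∘ inl) ∧ IsExtColoring G₂ k (f ∘ inr) ∧
        ∀ x y, f (inl x) = f (inr y) → f (inl x) = none := by
  constructor
  · intro hf
    exact ⟨⟨fun v => hf.1 _, fun u w h => hf.2 (by simpa using h)⟩,
      ⟨fun v => hf.1 _, fun u w h => hf.2 (by simpa using h)⟩,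
      fun x y => hf.2 (graphJoin_adj_inl_inr x y)⟩
  · rintro ⟨h₁, h₂, hc⟩
    refine ⟨?_, ?_⟩
    · rintro (v | v)
      exacts [h₁.1 v, h₂.1 v]
    · rintro (u | u) (w | w) hadj huw
      · exact h₁.2 (by simpa using hadj) huw
      · exact hc u w huw
      · rw [huw]
        exact hc w u huw.symm
      · exact h₂.2 (by simpa using hadj) huw

lemma exists_inl_mem_swappableSet {f : V₁ ⊕ V₂ → Option ℕ}
    (hf : IsExtColoring (graphJoin G₁ G₂) k f) (h : (swappableSet (f ∘ inl)).Nonempty) :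
    ∃ v, f (inl v) ∈ swappableSet f := by
  obtain ⟨c, ⟨v, hv, huniq⟩ | ⟨rfl, v, hv⟩⟩ := h
  · refine ⟨v, ?_⟩
    rcases hc : f (inl v) with _ | a
    · exact none_mem_swappableSet hc
    refine Or.inl ⟨inl v, hc, ?_⟩
    rintro (x | y) hx
    · exact congrArg inl (huniq x (hx.trans (hc.symm.trans hv)))
    · simpa [hc] using (isExtColoring_graphJoin_iff.mp hf).2.2 v y (hc.trans hx.symm)
  · exact ⟨v, by rw [show f (inl v) = none from hv]; exact none_mem_swappableSet hv⟩

lemma exists_inr_mem_swappableSet {f : V₁ ⊕ V₂ → Option ℕ}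
    (hf : IsExtColoring (graphJoin G₁ G₂) k f) (h : (swappableSet (f ∘ inr)).Nonempty) :
    ∃ v, f (inr v) ∈ swappableSet f := by
  have hf' : IsExtColoring (graphJoin G₂ G₁) k (f ∘ graphJoinComm) :=
    hf.comp_hom graphJoinComm.toHom
  have := exists_inl_mem_swappableSet hf' h
  rwa [swappableSet_comp_graphJoinComm] at this

section Swap

variable [DecidableEq V₁] [DecidableEq V₂]

lemma swap_inl_comp_inl (u w : V₁) :
    ⇑(Equiv.swap (inl u : V₁ ⊕ V₂) (inl w)) ∘ inl = inl ∘ Equiv.swap u w := by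
  rw [← Equiv.Perm.sumCongr_swap_refl]
  rfl

lemma swap_inl_comp_inr (u w : V₁) :
    ⇑(Equiv.swap (inl u : V₁ ⊕ V₂) (inl w)) ∘ inr = inr := by
  rw [← Equiv.Perm.sumCongr_swap_refl]
  rfl

lemma swap_inr_comp_inl (u w : V₂) :
    ⇑(Equiv.swap (inr u : V₁ ⊕ V₂) (inr w)) ∘ inl = inl := by
  rw [← Equiv.Perm.sumCongr_refl_swap]
  rfl

-- Two vertices on the same side are exchanged through a common neighbor on the other side.
lemma extReconf_graphJoin_comp_swap {g : V₁ ⊕ V₂ → Option ℕ}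
    (hg : IsExtColoring (graphJoin G₁ G₂) k g) {p q : V₁ ⊕ V₂} (hp : g p ∈ swappableSet g)
    (hq : g q ∈ swappableSet g) (h₁ : ∃ v, g (inl v) ∈ swappableSet g)
    (h₂ : ∃ v, g (inr v) ∈ swappableSet g) :
    ExtReconf (graphJoin G₁ G₂) k g (g ∘ Equiv.swap p q) := by
  rcases p with p | p <;> rcases q with q | q
  · obtain ⟨r, hr⟩ := h₂
    exact extReconf_comp_swap_of_common_neighbor hg (graphJoin_adj_inl_inr p r)
      (graphJoin_adj_inl_inr q r) hp hq hr
  · exact extReconf_comp_swap_of_mem hg (graphJoin_adj_inl_inr p q) hp hq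
  · exact extReconf_comp_swap_of_mem hg (graphJoin_adj_inr_inl p q) hp hq
  · obtain ⟨r, hr⟩ := h₁
    exact extReconf_comp_swap_of_common_neighbor hg (graphJoin_adj_inr_inl p r)
      (graphJoin_adj_inr_inl q r) hp hq hr

end Swap

end Join

section Projection

variable {V₁ V₂ : Type*} {G₁ : SimpleGraph V₁} {G₂ : SimpleGraph V₂} {k : ℕ}

-- A color `a ≠ ∗` at `u` occurs nowhere in `V₂`, all of whose vertices are adjacent to `u`; a
-- second vertex of `V₁` with color `a` would clash with `w`, which carries `a` after the swap.
lemma mem_swappableSet_of_comp_swap_inl_inr [DecidableEq V₁] [DecidableEq V₂]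
    {f : V₁ ⊕ V₂ → Option ℕ} (hf : IsExtColoring (graphJoin G₁ G₂) k f) {u : V₁} {w : V₂}
    (hf' : IsExtColoring (graphJoin G₁ G₂) k (f ∘ Equiv.swap (inl u) (inr w))) :
    f (inl u) ∈ swappableSet f := by
  rcases ha : f (inl u) with _ | a
  · exact none_mem_swappableSet ha
  refine Or.inl ⟨inl u, ha, ?_⟩
  rintro (x | y) hv
  · by_contra hxu
    have := (isExtColoring_graphJoin_iff.mp hf').2.2 x w
    simp [Equiv.swap_apply_of_ne_of_ne hxu, hv, ha] at this
  · have := (isExtColoring_graphJoin_iff.mp hf).2.2 u y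
    simp [hv, ha] at this

lemma starMask_comp_swap_inl_inr [DecidableEq V₁] [DecidableEq V₂]
    {f : V₁ ⊕ V₂ → Option ℕ} (hf : IsExtColoring (graphJoin G₁ G₂) k f) {u : V₁} {w : V₂}
    (hf' : IsExtColoring (graphJoin G₁ G₂) k (f ∘ Equiv.swap (inl u) (inr w))) :
    starMask (swappableSet f) (f ∘ Equiv.swap (inl u) (inr w)) = starMask (swappableSet f) f := by
  have hback : (f ∘ Equiv.swap (inl u) (inr w)) ∘ Equiv.swap (inl u) (inr w) = f := by
    funext; simp
  have hw := mem_swappableSet_of_comp_swap_inl_inr hf' (hback.symm ▸ hf)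
  rw [swappableSet_comp_equiv] at hw
  exact starMask_comp_swap_of_mem (mem_swappableSet_of_comp_swap_inl_inr hf hf')
    (by simpa using hw)

lemma ExtCSStep.extReconf_starMask_inl {f f' : V₁ ⊕ V₂ → Option ℕ}
    (h : ExtCSStep (graphJoin G₁ G₂) k f f') :
    ExtReconf G₁ k (starMask (swappableSet f) (f ∘ inl))
      (starMask (swappableSet f) (f' ∘ inl)) := by
  classical
  obtain ⟨hf, hf', hadj⟩ := h
  obtain ⟨u, w, huw, -, rfl⟩ := extCSAdj_iff_exists_swap.mp hadj
  rcases u with u | u <;> rcases w with w | w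
  · have hinl : (f ∘ Equiv.swap (inl u) (inl w)) ∘ inl = (f ∘ inl) ∘ Equiv.swap u w := by
      rw [comp_assoc, swap_inl_comp_inl]
      rfl
    have hres := (isExtColoring_graphJoin_iff.mp hf').1
    rw [hinl] at hres ⊢
    exact extReconf_comp_swap (by simpa using huw)
      (isExtColoring_starMask (isExtColoring_graphJoin_iff.mp hf).1 _)
      (isExtColoring_starMask hres _)
  · rw [starMask_comp _ (f ∘ _), starMask_comp_swap_inl_inr hf hf']
    exact .refl
  · rw [Equiv.swap_comm] at hf' ⊢
    rw [starMask_comp _ (f ∘ _), starMask_comp_swap_inl_inr hf hf']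
    exact .refl
  · rw [comp_assoc, swap_inr_comp_inl]
    exact .refl

lemma ExtReconf.extReconf_starMask_inl {f f' : V₁ ⊕ V₂ → Option ℕ}
    (h : ExtReconf (graphJoin G₁ G₂) k f f') :
    ExtReconf G₁ k (starMask (swappableSet f) (f ∘ inl))
      (starMask (swappableSet f') (f' ∘ inl)) := by
  induction h with
  | refl => exact .refl
  | tail _ hstep ih =>
    rw [ExtReconf.swappableSet_eq (.single hstep)]
    exact ih.trans hstep.extReconf_starMask_inl

lemma ExtReconf.extReconf_starMask_inr {f f' : V₁ ⊕ V₂ → Option ℕ}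
    (h : ExtReconf (graphJoin G₁ G₂) k f f') :
    ExtReconf G₂ k (starMask (swappableSet f) (f ∘ inr))
      (starMask (swappableSet f') (f' ∘ inr)) := by
  have := (h.comp_iso graphJoinComm).extReconf_starMask_inl
  rwa [swappableSet_comp_graphJoinComm, swappableSet_comp_graphJoinComm] at this

end Projection

section Lifting

variable {V₁ V₂ : Type*} {G₁ : SimpleGraph V₁} {G₂ : SimpleGraph V₂} {k : ℕ}

lemma exists_extCSStep_lift_inl {g : V₁ ⊕ V₂ → Option ℕ}
    (hg : IsExtColoring (graphJoin G₁ G₂) k g) {M : V₁ → Option ℕ}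
    (h : ExtCSStep G₁ k (starMask (swappableSet g) (g ∘ inl)) M) :
    ∃ g', ExtCSStep (graphJoin G₁ G₂) k g g' ∧ starMask (swappableSet g) (g' ∘ inl) = M ∧
      g' ∘ inr = g ∘ inr := by
  classical
  obtain ⟨-, hM, hadj⟩ := h
  obtain ⟨u, w, huw, hne, rfl⟩ := extCSAdj_iff_exists_swap.mp hadj
  have hinl : (g ∘ Equiv.swap (inl u) (inl w)) ∘ inl = (g ∘ inl) ∘ Equiv.swap u w := by
    rw [comp_assoc, swap_inl_comp_inl]
    rfl
  have hinr : (g ∘ Equiv.swap (inl u) (inl w)) ∘ inr = g ∘ inr := by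
    rw [comp_assoc, swap_inl_comp_inr]
  have hmask := isExtColoring_graphJoin_iff.mp (isExtColoring_starMask hg (swappableSet g))
  have hswap : IsExtColoring (graphJoin G₁ G₂) k (g ∘ Equiv.swap (inl u) (inl w)) := by
    refine isExtColoring_of_starMask (fun v => hg.1 _) ?_
    rw [swappableSet_comp_equiv, starMask_comp]
    refine isExtColoring_graphJoin_iff.mpr ⟨?_, ?_, fun x y => ?_⟩
    · rw [comp_assoc, swap_inl_comp_inl]
      exact hM
    · rw [comp_assoc, swap_inl_comp_inr]
      exact hmask.2.1
    · have hx : Equiv.swap (inl u : V₁ ⊕ V₂) (inl w) (inl x) = inl (Equiv.swap u w x) :=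
        congrFun (swap_inl_comp_inl u w) x
      have hy : Equiv.swap (inl u : V₁ ⊕ V₂) (inl w) (inr y) = inr y :=
        congrFun (swap_inl_comp_inr u w) y
      simpa only [comp_apply, hx, hy] using hmask.2.2 (Equiv.swap u w x) y
  refine ⟨g ∘ Equiv.swap (inl u) (inl w), ⟨hg, hswap, extCSAdj_iff_exists_swap.mpr
    ⟨inl u, inl w, by simpa using huw, fun h => hne (by simp [starMask, h]), rfl⟩⟩, ?_, hinr⟩
  rw [hinl]
  rfl

lemma exists_extReconf_lift_inl {g : V₁ ⊕ V₂ → Option ℕ}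
    (hg : IsExtColoring (graphJoin G₁ G₂) k g) {M : V₁ → Option ℕ}
    (h : ExtReconf G₁ k (starMask (swappableSet g) (g ∘ inl)) M) :
    ∃ g', ExtReconf (graphJoin G₁ G₂) k g g' ∧ starMask (swappableSet g) (g' ∘ inl) = M ∧
      g' ∘ inr = g ∘ inr := by
  induction h with
  | refl => exact ⟨g, .refl, rfl, rfl⟩
  | tail _ hstep ih =>
    obtain ⟨g', hgg', rfl, hinr⟩ := ih
    have hS := hgg'.swappableSet_eq
    obtain ⟨g'', hstep', hmask, hinr'⟩ :=
      exists_extCSStep_lift_inl (hgg'.isExtColoring hg) (by rwa [hS])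
    exact ⟨g'', hgg'.tail hstep', by rwa [hS] at hmask, hinr'.trans hinr⟩

lemma exists_extReconf_lift_inr {g : V₁ ⊕ V₂ → Option ℕ}
    (hg : IsExtColoring (graphJoin G₁ G₂) k g) {M : V₂ → Option ℕ}
    (h : ExtReconf G₂ k (starMask (swappableSet g) (g ∘ inr)) M) :
    ∃ g', ExtReconf (graphJoin G₁ G₂) k g g' ∧ starMask (swappableSet g) (g' ∘ inr) = M ∧
      g' ∘ inl = g ∘ inl := by
  have hg' : IsExtColoring (graphJoin G₂ G₁) k (g ∘ graphJoinComm) :=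
    hg.comp_hom graphJoinComm.toHom
  obtain ⟨g', hgg', hmask, hinr⟩ :=
    exists_extReconf_lift_inl hg' (by rwa [swappableSet_comp_graphJoinComm])
  rw [swappableSet_comp_graphJoinComm] at hmask
  refine ⟨g' ∘ Sum.swap, ?_, hmask, hinr⟩
  simpa [comp_assoc] using hgg'.comp_iso graphJoinComm

end Lifting

-- Induction on the number of vertices where `g` and `h` differ: such a vertex carries a
-- swappable color in both, and one swap of swappable colors repairs it.
theorem extReconf_of_starMask_eq {V₁ V₂ : Type*} [Fintype V₁] [Fintype V₂] [DecidableEq V₁]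
    [DecidableEq V₂] {G₁ : SimpleGraph V₁} {G₂ : SimpleGraph V₂} {k : ℕ}
    {g h : V₁ ⊕ V₂ → Option ℕ} (hg : IsExtColoring (graphJoin G₁ G₂) k g)
    (hcard : ∀ c, #{v | g v = c} = #{v | h v = c})
    (hmask : starMask (swappableSet h) g = starMask (swappableSet h) h)
    (h₁ : ∃ v, h (inl v) ∈ swappableSet h) (h₂ : ∃ v, h (inr v) ∈ swappableSet h) :
    ExtReconf (graphJoin G₁ G₂) k g h := by
  have hS : swappableSet g = swappableSet h := swappableSet_eq_of_card_filter_eq hcard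
  have hpos : ∀ v, g v ∈ swappableSet h ↔ h v ∈ swappableSet h := fun v => by
    rw [← starMask_swappableSet_eq_none_iff, ← hmask, ← hS, starMask_swappableSet_eq_none_iff]
  by_cases hgh : g = h
  · exact hgh ▸ .refl
  obtain ⟨p, hp⟩ := Function.ne_iff.mp hgh
  have hgp : g p ∈ swappableSet h := by
    by_contra hgp
    have hmp := congrFun hmask p
    simp only [starMask, if_neg hgp, if_neg ((hpos p).not.mp hgp)] at hmp
    exact hp hmp
  obtain ⟨q, hgq, hhq⟩ := exists_eq_ne_of_card_filter_eq (hcard (h p)) hp rfl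
  have hgq' : g q ∈ swappableSet h := hgq ▸ (hpos p).mp hgp
  have hstep : ExtReconf (graphJoin G₁ G₂) k g (g ∘ Equiv.swap p q) := by
    rw [← hS] at hgp hgq' h₁ h₂ hpos
    obtain ⟨v₁, hv₁⟩ := h₁
    obtain ⟨v₂, hv₂⟩ := h₂
    exact extReconf_graphJoin_comp_swap hg hgp hgq' ⟨v₁, (hpos _).mpr hv₁⟩ ⟨v₂, (hpos _).mpr hv₂⟩
  have hmask' : starMask (swappableSet h) (g ∘ Equiv.swap p q) = starMask (swappableSet h) h := by
    rw [starMask_comp_swap_of_mem hgp hgq', hmask]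
  exact hstep.trans (extReconf_of_starMask_eq (hstep.isExtColoring hg)
    (fun c => (card_filter_comp_equiv g _ c).trans (hcard c)) hmask' h₁ h₂)
termination_by #{v | g v ≠ h v}
decreasing_by exact card_filter_comp_swap_ne_lt hp hgq hhq

theorem stmt_16_general {V₁ V₂ : Type*} [Fintype V₁] [Fintype V₂]
    (G₁ : SimpleGraph V₁) (G₂ : SimpleGraph V₂) (k : ℕ)
    (fs ft : V₁ ⊕ V₂ → Option ℕ)
    (hfs : IsExtColoring (graphJoin G₁ G₂) k fs)
    (hvalid : ∀ c : Option ℕ,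
      (Finset.univ.filter fun v => fs v = c).card =
        (Finset.univ.filter fun v => ft v = c).card)
    (hne1 : swappableSet (fs ∘ Sum.inl) ≠ ∅)
    (hne2 : swappableSet (fs ∘ Sum.inr) ≠ ∅) :
    ExtReconf (graphJoin G₁ G₂) k fs ft ↔
      ExtReconf G₁ k (starMask (swappableSet fs) (fs ∘ Sum.inl))
        (starMask (swappableSet ft) (ft ∘ Sum.inl)) ∧
      ExtReconf G₂ k (starMask (swappableSet fs) (fs ∘ Sum.inr))
        (starMask (swappableSet ft) (ft ∘ Sum.inr)) := by
  classical
  refine ⟨fun h => ⟨h.extReconf_starMask_inl, h.extReconf_starMask_inr⟩, ?_⟩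
  rintro ⟨hR₁, hR₂⟩
  have hpos₁ := hR₁.exists_mem_swappableSet
    (exists_inl_mem_swappableSet hfs (Set.nonempty_iff_ne_empty.mpr hne1))
  have hpos₂ := hR₂.exists_mem_swappableSet
    (exists_inr_mem_swappableSet hfs (Set.nonempty_iff_ne_empty.mpr hne2))
  have hS : swappableSet ft = swappableSet fs := (swappableSet_eq_of_card_filter_eq hvalid).symm
  rw [hS] at hR₁ hR₂
  obtain ⟨g₁, hfsg₁, hmask₁, hinr₁⟩ := exists_extReconf_lift_inl hfs hR₁
  rw [← hinr₁, ← hfsg₁.swappableSet_eq] at hR₂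
  obtain ⟨g₂, hg₁g₂, hmask₂, hinl₂⟩ := exists_extReconf_lift_inr (hfsg₁.isExtColoring hfs) hR₂
  have hmask : starMask (swappableSet ft) g₂ = starMask (swappableSet ft) ft := by
    rw [hfsg₁.swappableSet_eq] at hmask₂
    rw [← hinl₂] at hmask₁
    funext v
    rcases v with v | v
    exacts [congrFun (hS ▸ hmask₁) v, congrFun (hS ▸ hmask₂) v]
  have hfsg₂ : ExtReconf (graphJoin G₁ G₂) k fs g₂ := hfsg₁.trans hg₁g₂
  obtain ⟨σ, hσ⟩ := hfsg₂.exists_perm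
  refine hfsg₂.trans (extReconf_of_starMask_eq (hfsg₂.isExtColoring hfs) (fun c => ?_) hmask
    hpos₁ hpos₂)
  rw [hσ, card_filter_comp_equiv, hvalid]

/-- in a join, for a valid instance where both restrictions of
`f_s` have nonempty swappable sets, `f_s` and `f_t` are reconfigurable iff the
starred restrictions `f^j_{s∗}` and `f^j_{t∗}` are reconfigurable on each side. -/
theorem stmt_16 {V₁ V₂ : Type*} [Fintype V₁] [Fintype V₂]
    (G₁ : SimpleGraph V₁) (G₂ : SimpleGraph V₂) (k : ℕ) (hk : 1 ≤ k)
    (fs ft : V₁ ⊕ V₂ → Option ℕ)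
    (hfs : IsExtColoring (graphJoin G₁ G₂) k fs)
    (hft : IsExtColoring (graphJoin G₁ G₂) k ft)
    (hvalid : ∀ c : Option ℕ,
      (Finset.univ.filter fun v => fs v = c).card =
        (Finset.univ.filter fun v => ft v = c).card)
    (hne1 : swappableSet (fs ∘ Sum.inl) ≠ ∅)
    (hne2 : swappableSet (fs ∘ Sum.inr) ≠ ∅) :
    ExtReconf (graphJoin G₁ G₂) k fs ft ↔
      ExtReconf G₁ k (starMask (swappableSet fs) (fs ∘ Sum.inl))
        (starMask (swappableSet ft) (ft ∘ Sum.inl)) ∧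
      ExtReconf G₂ k (starMask (swappableSet fs) (fs ∘ Sum.inr))
        (starMask (swappableSet ft) (ft ∘ Sum.inr)) :=
  stmt_16_general G₁ G₂ k fs ft hfs hvalid hne1 hne2
end

section
/- Let G be a finite simple graph, k a positive integer, and f a proper k-coloring of G. Let u and v be distinct vertices of G with N_G(u) = N_G(v) and f(u) = f(v) (such vertices are called frozen with respect to f). Then every proper k-coloring f′ that is reconfigurable from f under color swapping satisfies f′(u) = f(u) and f′(v) = f(v); that is, no color swap in any reconfiguration sequence starting from f involves u or v. -/
/-- A proper `k`-coloring of `G`: a map `f : V → {1,…,k}` assigning different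
colors to adjacent vertices. -/
def IsProperColoring {V : Type*} (G : SimpleGraph V) (k : ℕ) (f : V → ℕ) : Prop :=
  (∀ v, f v ∈ Finset.Icc 1 k) ∧ ∀ ⦃u w : V⦄, G.Adj u w → f u ≠ f w

/-- Two colorings are adjacent under color swapping: there is an edge `uw` whose
endpoint colors are exchanged, all other vertices keep their color, and the two
colorings are distinct. -/
def CSAdj {V : Type*} (G : SimpleGraph V) (f f' : V → ℕ) : Prop :=
  f ≠ f' ∧ ∃ u w : V, G.Adj u w ∧ f u = f' w ∧ f w = f' u ∧
    ∀ x : V, x ≠ u → x ≠ w → f x = f' x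

/-- One step of the color-swapping reconfiguration between proper `k`-colorings. -/
def CSStep {V : Type*} (G : SimpleGraph V) (k : ℕ) (f f' : V → ℕ) : Prop :=
  IsProperColoring G k f ∧ IsProperColoring G k f' ∧ CSAdj G f f'

/-- Two proper `k`-colorings are reconfigurable under color swapping. -/
def CSReconf {V : Type*} (G : SimpleGraph V) (k : ℕ) : (V → ℕ) → (V → ℕ) → Prop :=
  Relation.ReflTransGen (CSStep G k)

/-!
If a swap along an edge `ub` moved a vertex `u` with a twin `v` (same neighbourhood, same color),
then `b` would receive the old color of `u`, which `v` keeps; but `b` is also adjacent to `v`,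
so the new coloring would not be proper. Hence twins of equal color are never touched.
-/

theorem SimpleGraph.adj_of_neighborSet_eq {V : Type*} {G : SimpleGraph V} {u v w : V}
    (hN : G.neighborSet u = G.neighborSet v) (h : G.Adj u w) : G.Adj v w := by
  rwa [← SimpleGraph.mem_neighborSet, ← hN]

section Twins

variable {V : Type*} {G : SimpleGraph V} {g g' : V → ℕ} {u v : V}

lemma false_of_swap_at_twin (hg' : ∀ ⦃x y : V⦄, G.Adj x y → g' x ≠ g' y) (huv : u ≠ v)
    (hN : G.neighborSet u = G.neighborSet v) (hguv : g u = g v) {b : V} (hub : G.Adj u b)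
    (hswap : g u = g' b) (hfix : ∀ x : V, x ≠ u → x ≠ b → g x = g' x) : False := by
  have hvb : G.Adj v b := SimpleGraph.adj_of_neighborSet_eq hN hub
  have hv : g v = g' v := hfix v huv.symm hvb.ne
  exact hg' hvb (by rw [← hv, ← hguv, hswap])

lemma CSAdj.apply_eq_of_twin (h : CSAdj G g g') (hg' : ∀ ⦃x y : V⦄, G.Adj x y → g' x ≠ g' y)
    (huv : u ≠ v) (hN : G.neighborSet u = G.neighborSet v) (hguv : g u = g v) :
    g' u = g u := by
  obtain ⟨-, a, b, hab, hab', hba', hfix⟩ := h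
  have hua : u ≠ a := by
    rintro rfl
    exact false_of_swap_at_twin hg' huv hN hguv hab hab' hfix
  have hub : u ≠ b := by
    rintro rfl
    exact false_of_swap_at_twin hg' huv hN hguv hab.symm hba' fun x hxu hxa => hfix x hxa hxu
  exact (hfix u hua hub).symm

end Twins

theorem stmt_17_general {V : Type*} (G : SimpleGraph V) (k : ℕ)
    (f : V → ℕ)
    (u v : V) (huv : u ≠ v) (hN : G.neighborSet u = G.neighborSet v)
    (hcol : f u = f v) :
    ∀ f' : V → ℕ, CSReconf G k f f' → f' u = f u ∧ f' v = f v := by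
  intro f' h
  induction h with
  | refl => exact ⟨rfl, rfl⟩
  | @tail g g' _ hstep ih =>
    obtain ⟨-, ⟨-, hproper⟩, hadj⟩ := hstep
    have hguv : g u = g v := by rw [ih.1, ih.2, hcol]
    exact ⟨(hadj.apply_eq_of_twin hproper huv hN hguv).trans ih.1,
      (hadj.apply_eq_of_twin hproper huv.symm hN.symm hguv.symm).trans ih.2⟩

/-- frozen vertices. If `u ≠ v` have the same open neighborhood
and the same color under a proper `k`-coloring `f`, then their colors never
change in any coloring reconfigurable from `f` under color swapping. -/
theorem stmt_17 {V : Type*} [Fintype V] (G : SimpleGraph V) (k : ℕ) (hk : 1 ≤ k)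
    (f : V → ℕ) (hf : IsProperColoring G k f)
    (u v : V) (huv : u ≠ v) (hN : G.neighborSet u = G.neighborSet v)
    (hcol : f u = f v) :
    ∀ f' : V → ℕ, CSReconf G k f f' → f' u = f u ∧ f' v = f v :=
  stmt_17_general G k f u v huv hN hcol
end

section
/- Let G be a finite split graph with vertex partition V(G) = C ∪ I, where C is a clique and I is an independent set, let k be a positive integer, and let f_s, f_t be proper k-colorings of G. Let u, v, w ∈ I be pairwise distinct vertices with N_G(u) = N_G(v) = N_G(w), f_s(u) = f_s(v) = f_s(w), and f_t(u) = f_t(v) = f_t(w) = f_s(u). Let G′ be the graph obtained from G by deleting w, and let f′_s and f′_t be the restrictions of f_s and f_t to V(G) ∖ {w}. Then f_s and f_t are reconfigurable under color swapping in G if and only if f′_s and f′_t are reconfigurable under color swapping in G′. -/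
section

variable {V : Type*} {G : SimpleGraph V} {k : ℕ}

lemma IsProperColoring.induce {f : V → ℕ} (hf : IsProperColoring G k f) (s : Set V) :
    IsProperColoring (G.induce s) k (fun x => f x) :=
  ⟨fun x => hf.1 x, fun _ _ hxy => hf.2 hxy⟩

section Twins

variable {f f' g : V → ℕ} {x y : V}

lemma not_adj_of_neighborSet_subset (hN : G.neighborSet x ⊆ G.neighborSet y) : ¬ G.Adj x y :=
  fun hxy => G.irrefl (hN hxy)

lemma CSStep.apply_eq_of_twin (h : CSStep G k f f') (hxy : x ≠ y)
    (hN : G.neighborSet x ⊆ G.neighborSet y) (hc : f x = f y) : f' x = f x := by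
  obtain ⟨-, hf', -, a, b, hab, hfa, hfb, hrest⟩ := h
  have hsafe : ∀ a b, G.Adj a b → f a = f' b → (∀ z, z ≠ a → z ≠ b → f z = f' z) →
      x ≠ a := by
    rintro a b hab hfa hrest rfl
    have hyb : y ≠ b := by
      rintro rfl
      exact not_adj_of_neighborSet_subset hN hab
    exact hf'.2 (hN hab) (by rw [← hrest y hxy.symm hyb, ← hc, hfa])
  exact (hrest x (hsafe a b hab hfa hrest)
    (hsafe b a hab.symm hfb fun z hzb hza => hrest z hza hzb)).symm

lemma CSReconf.apply_eq_of_twins (h : CSReconf G k f g) (hxy : x ≠ y)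
    (hN : G.neighborSet x = G.neighborSet y) (hc : f x = f y) : g x = f x ∧ g y = f y := by
  induction h with
  | refl => exact ⟨rfl, rfl⟩
  | @tail p _ _ hstep ih =>
    obtain ⟨hx, hy⟩ := ih
    have hp : p x = p y := hx.trans (hc.trans hy.symm)
    exact ⟨(hstep.apply_eq_of_twin hxy hN.le hp).trans hx,
      (hstep.apply_eq_of_twin hxy.symm hN.ge hp.symm).trans hy⟩

lemma neighborSet_induce_congr {s : Set V} {x y : s} (hN : G.neighborSet x = G.neighborSet y) :
    (G.induce s).neighborSet x = (G.induce s).neighborSet y := by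
  ext z
  exact Set.ext_iff.mp hN z

end Twins

section Restrict

variable {f f' g : V → ℕ}

lemma CSStep.induce (h : CSStep G k f f') (s : Set V) (hs : ∀ x ∉ s, f x = f' x) :
    CSStep (G.induce s) k (fun x => f x) (fun x => f' x) := by
  obtain ⟨hf, hf', -, a, b, hab, hfa, hfb, hrest⟩ := h
  have ha : a ∈ s := by
    by_contra ha
    exact hf'.2 hab (hfa.symm.trans (hs a ha)).symm
  have hb : b ∈ s := by
    by_contra hb
    exact hf'.2 hab (hfb.symm.trans (hs b hb))
  refine ⟨hf.induce s, hf'.induce s, fun he => hf'.2 hab ?_, ⟨a, ha⟩, ⟨b, hb⟩, hab, hfa,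
    hfb, fun z hza hzb => hrest z (fun e => hza (Subtype.ext e)) (fun e => hzb (Subtype.ext e))⟩
  rw [← congrFun he ⟨a, ha⟩]
  exact hfa

lemma CSReconf.induce (h : CSReconf G k f g) (s : Set V)
    (hfix : ∀ g', CSReconf G k f g' → ∀ x ∉ s, g' x = f x) :
    CSReconf (G.induce s) k (fun x => f x) (fun x => g x) := by
  induction h with
  | refl => exact .refl
  | @tail p q hp hstep ih =>
    refine ih.tail (hstep.induce s fun x hx => ?_)
    rw [hfix p hp x hx, hfix q (hp.tail hstep) x hx]

end Restrict

section Extend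

variable {w : V} (c : ℕ)

open Classical in
noncomputable def extendAt (h : {x : V | x ≠ w} → ℕ) : V → ℕ :=
  fun x => if hx : x = w then c else h ⟨x, hx⟩

@[simp] lemma extendAt_self (h : {x : V | x ≠ w} → ℕ) : extendAt c h w = c := dif_pos rfl

@[simp] lemma extendAt_of_ne (h : {x : V | x ≠ w} → ℕ) {x : V} (hx : x ≠ w) :
    extendAt c h x = h ⟨x, hx⟩ := dif_neg hx

lemma extendAt_restrict {g : V → ℕ} (hg : g w = c) :
    extendAt c (fun x : {x : V | x ≠ w} => g x) = g := by
  funext x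
  by_cases hx : x = w
  · subst hx
    simp [hg]
  · simp [hx]

variable {u : V} (huw : u ≠ w) (hN : G.neighborSet w ⊆ G.neighborSet u)
include huw hN

lemma isProperColoring_extendAt {h : {x : V | x ≠ w} → ℕ}
    (hh : IsProperColoring (G.induce {x | x ≠ w}) k h) (hc : h ⟨u, huw⟩ = c) :
    IsProperColoring G k (extendAt c h) := by
  have hw_nbr : ∀ y (hy : y ≠ w), G.Adj w y → h ⟨y, hy⟩ ≠ c := fun y hy hwy => by
    rw [← hc]
    exact hh.2 (G.adj_symm (hN hwy))
  refine ⟨fun x => ?_, fun x y hxy => ?_⟩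
  · by_cases hx : x = w
    · simp only [hx, extendAt_self, ← hc]
      exact hh.1 _
    · simp only [hx, ne_eq, not_false_eq_true, extendAt_of_ne]
      exact hh.1 _
  · by_cases hx : x = w
    · subst hx
      have hy : y ≠ x := (G.ne_of_adj hxy).symm
      simpa [hy] using (hw_nbr y hy hxy).symm
    · by_cases hy : y = w
      · subst hy
        simpa [hx] using hw_nbr x hx hxy.symm
      · simpa [hx, hy] using @hh.2 ⟨x, hx⟩ ⟨y, hy⟩ hxy

lemma csStep_extendAt {h h' : {x : V | x ≠ w} → ℕ}
    (hstep : CSStep (G.induce {x | x ≠ w}) k h h') (hc : h ⟨u, huw⟩ = c)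
    (hc' : h' ⟨u, huw⟩ = c) : CSStep G k (extendAt c h) (extendAt c h') := by
  obtain ⟨hh, hh', hne, a, b, hab, hfa, hfb, hrest⟩ := hstep
  have hext : ∀ (h : {x : V | x ≠ w} → ℕ) (x : {x : V | x ≠ w}), extendAt c h x = h x :=
    fun h x => extendAt_of_ne c h x.2
  refine ⟨isProperColoring_extendAt c huw hN hh hc, isProperColoring_extendAt c huw hN hh' hc',
    fun he => hne ?_, a, b, hab, by rwa [hext, hext], by rwa [hext, hext], fun x hxa hxb => ?_⟩
  · funext x
    rw [← hext h, ← hext h', he]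
  · by_cases hx : x = w
    · simp [hx]
    · simpa [hx] using hrest ⟨x, hx⟩ (fun e => hxa (congrArg Subtype.val e))
        (fun e => hxb (congrArg Subtype.val e))

lemma csReconf_extendAt {h₀ h₁ : {x : V | x ≠ w} → ℕ}
    (hreach : CSReconf (G.induce {x | x ≠ w}) k h₀ h₁)
    (hfix : ∀ h, CSReconf (G.induce {x | x ≠ w}) k h₀ h → h ⟨u, huw⟩ = c) :
    CSReconf G k (extendAt c h₀) (extendAt c h₁) := by
  induction hreach with
  | refl => exact .refl
  | @tail p q hp hstep ih =>
    exact ih.tail (csStep_extendAt c huw hN hstep (hfix p hp) (hfix q (hp.tail hstep)))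

end Extend

end

theorem stmt_18_general {V : Type*} (G : SimpleGraph V)
    (k : ℕ) (fs ft : V → ℕ)
    (u v w : V)
    (huv : u ≠ v) (huw : u ≠ w) (hvw : v ≠ w)
    (hN1 : G.neighborSet u = G.neighborSet v)
    (hN2 : G.neighborSet v = G.neighborSet w)
    (hc1 : fs u = fs v) (hc2 : fs v = fs w)
    (hc5 : ft w = fs u) :
    CSReconf G k fs ft ↔
      CSReconf (G.induce {x : V | x ≠ w}) k
        (fun x => fs x.1) (fun x => ft x.1) := by
  have hNuw : G.neighborSet u = G.neighborSet w := hN1.trans hN2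
  have hcuw : fs u = fs w := hc1.trans hc2
  constructor
  · intro hreach
    refine hreach.induce _ fun g hg x hx => ?_
    obtain rfl : x = w := of_not_not hx
    exact (hg.apply_eq_of_twins huw hNuw hcuw).2
  · intro hreach
    have hfix : ∀ h, CSReconf (G.induce {x | x ≠ w}) k (fun x => fs x.1) h →
        h ⟨u, huw⟩ = fs u := fun h hh =>
      (hh.apply_eq_of_twins (x := ⟨u, huw⟩) (y := ⟨v, hvw⟩)
        (fun e => huv (congrArg Subtype.val e))
        (neighborSet_induce_congr hN1) hc1).1
    have hext := csReconf_extendAt (fs u) huw hNuw.ge hreach hfix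
    rwa [extendAt_restrict _ hcuw.symm, extendAt_restrict _ hc5] at hext

/-- safeness of the split-graph reduction rule deleting the third
of three twin vertices of the independent side with equal neighborhoods and
equal (initial and target) colors. -/
theorem stmt_18 {V : Type*} [Fintype V] (G : SimpleGraph V)
    (K S : Set V) (hcover : ∀ x, x ∈ K ∨ x ∈ S) (hdisj : Disjoint K S)
    (hK : G.IsClique K) (hS : ∀ a ∈ S, ∀ b ∈ S, ¬ G.Adj a b)
    (k : ℕ) (hk : 1 ≤ k) (fs ft : V → ℕ)
    (hfs : IsProperColoring G k fs) (hft : IsProperColoring G k ft)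
    (u v w : V) (hu : u ∈ S) (hv : v ∈ S) (hw : w ∈ S)
    (huv : u ≠ v) (huw : u ≠ w) (hvw : v ≠ w)
    (hN1 : G.neighborSet u = G.neighborSet v)
    (hN2 : G.neighborSet v = G.neighborSet w)
    (hc1 : fs u = fs v) (hc2 : fs v = fs w)
    (hc3 : ft u = fs u) (hc4 : ft v = fs u) (hc5 : ft w = fs u) :
    CSReconf G k fs ft ↔
      CSReconf (G.induce {x : V | x ≠ w}) k
        (fun x => fs x.1) (fun x => ft x.1) :=
  stmt_18_general G k fs ft u v w huv huw hvw hN1 hN2 hc1 hc2 hc5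
end

section
/- Let G be a finite split graph with vertex partition V(G) = C ∪ I, where C is a clique and I is an independent set, and suppose G admits a proper k-coloring f_s. Suppose further that no three pairwise distinct vertices u, v, w ∈ I satisfy N_G(u) = N_G(v) = N_G(w) and f_s(u) = f_s(v) = f_s(w) (i.e., the reduction rule of the paper's kernelization cannot be applied). Then |C| ≤ k and |I| ≤ 2k·2^k, so |V(G)| ≤ k + 2k·2^k. -/
/-- kernel size bound for CRCS on split graphs. If `G` is a split
graph with clique side `K` and independent side `I`, `f_s` is a proper
`k`-coloring, and no three pairwise distinct vertices of `I` have equal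
neighborhoods and equal `f_s`-colors, then `|K| ≤ k`, `|I| ≤ 2k·2^k`, and
`|V(G)| ≤ k + 2k·2^k`. -/
theorem stmt_19 {V : Type*} [Fintype V] [DecidableEq V] (G : SimpleGraph V)
    (K I : Finset V) (hcover : ∀ x, x ∈ K ∨ x ∈ I) (hdisj : Disjoint K I)
    (hK : G.IsClique (K : Set V)) (hI : ∀ a ∈ I, ∀ b ∈ I, ¬ G.Adj a b)
    (k : ℕ) (hk : 1 ≤ k) (fs : V → ℕ) (hfs : IsProperColoring G k fs)
    (hnored : ¬ ∃ u ∈ I, ∃ v ∈ I, ∃ w ∈ I,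
        u ≠ v ∧ u ≠ w ∧ v ≠ w ∧
        G.neighborSet u = G.neighborSet v ∧ G.neighborSet v = G.neighborSet w ∧
        fs u = fs v ∧ fs v = fs w) :
    K.card ≤ k ∧ I.card ≤ 2 * k * 2 ^ k ∧ Fintype.card V ≤ k + 2 * k * 2 ^ k := by
  classical
  have hKk : K.card ≤ k := by
    have hmem : ∀ v ∈ K, fs v ∈ Finset.Icc 1 k := fun v _ => hfs.1 v
    have hinj : Set.InjOn fs K := by
      intro a ha b hb hab
      by_contra hne
      exact hfs.2 (hK ha hb hne) hab
    calc K.card ≤ (Finset.Icc 1 k).card := Finset.card_le_card_of_injOn fs hmem hinj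
      _ = k := by simp
  have hNsub : ∀ v ∈ I, G.neighborFinset v ⊆ K := by
    intro v hv u hu
    rw [SimpleGraph.mem_neighborFinset] at hu
    rcases hcover u with h | h
    · exact h
    · exact absurd hu (hI v hv u h)
  set φ : V → ℕ × Finset V := fun v => (fs v, G.neighborFinset v) with hφ
  have hIcard : I.card ≤ 2 * k * 2 ^ k := by
    have himg : Finset.image φ I ⊆ (Finset.Icc 1 k) ×ˢ K.powerset := by
      intro p hp
      obtain ⟨v, hv, rfl⟩ := Finset.mem_image.mp hp
      simp only [Finset.mem_product, Finset.mem_powerset, hφ]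
      exact ⟨hfs.1 v, hNsub v hv⟩
    have hfib : ∀ p ∈ Finset.image φ I, (I.filter (fun v => φ v = p)).card ≤ 2 := by
      intro p _
      by_contra h
      push_neg at h
      obtain ⟨t, hts, ht3⟩ := Finset.exists_subset_card_eq h
      obtain ⟨a, b, c, hab, hac, hbc, rfl⟩ := Finset.card_eq_three.mp ht3
      have ha := hts (by simp : a ∈ ({a,b,c} : Finset V))
      have hb := hts (by simp : b ∈ ({a,b,c} : Finset V))
      have hc := hts (by simp : c ∈ ({a,b,c} : Finset V))
      simp only [Finset.mem_filter, hφ, Prod.ext_iff] at ha hb hc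
      apply hnored
      refine ⟨a, ha.1, b, hb.1, c, hc.1, hab, hac, hbc, ?_, ?_, ?_, ?_⟩
      · have : G.neighborFinset a = G.neighborFinset b := ha.2.2.trans hb.2.2.symm
        simpa [SimpleGraph.neighborFinset, Set.toFinset_inj] using this
      · have : G.neighborFinset b = G.neighborFinset c := hb.2.2.trans hc.2.2.symm
        simpa [SimpleGraph.neighborFinset, Set.toFinset_inj] using this
      · exact ha.2.1.trans hb.2.1.symm
      · exact hb.2.1.trans hc.2.1.symm
    calc I.card = ∑ p ∈ Finset.image φ I, (I.filter (fun v => φ v = p)).card :=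
        Finset.card_eq_sum_card_fiberwise (fun v hv => Finset.mem_image_of_mem φ hv)
      _ ≤ ∑ _p ∈ Finset.image φ I, 2 := Finset.sum_le_sum hfib
      _ = 2 * (Finset.image φ I).card := by rw [Finset.sum_const, smul_eq_mul, mul_comm]
      _ ≤ 2 * ((Finset.Icc 1 k) ×ˢ K.powerset).card :=
          Nat.mul_le_mul_left 2 (Finset.card_le_card himg)
      _ = 2 * (k * 2 ^ K.card) := by simp [Finset.card_product]
      _ ≤ 2 * (k * 2 ^ k) :=
          Nat.mul_le_mul_left 2 (Nat.mul_le_mul_left k (Nat.pow_le_pow_right (by norm_num) hKk))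
      _ = 2 * k * 2 ^ k := by ring
  refine ⟨hKk, hIcard, ?_⟩
  have hV : Fintype.card V ≤ K.card + I.card := by
    rw [← Finset.card_univ]
    calc Finset.univ.card ≤ (K ∪ I).card :=
        Finset.card_le_card (fun x _ => Finset.mem_union.mpr (hcover x))
      _ ≤ K.card + I.card := Finset.card_union_le K I
  omega
end
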